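/- arXiv:1202.2231 — 3 statements merged into one kernel-verified Lean document; each statement's English description precedes it below -/
import Mathlib

section
/- Let G be a K×K nonnegative matrix and η ∈ ℝ^K with η > 0 componentwise. If there exists p ≥ 0 with p ≥ Gp + η componentwise, then ρ(G) < 1. -/
open Matrix

/-- If `G` is a nonnegative matrix and `η > 0` componentwise, and there exists
`p ≥ 0` with `G p + η ≤ p` componentwise, then the spectral radius of `G` is
less than one. -/
theorem stmt_10 (K : ℕ) (G : Matrix (Fin K) (Fin K) ℝ) (η : Fin K → ℝ)
    (hG : ∀ k j, 0 ≤ G k j) (hη : ∀ k, 0 < η k)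
    (hfeas : ∃ p : Fin K → ℝ, (∀ k, 0 ≤ p k) ∧ ∀ k, (G *ᵥ p + η) k ≤ p k) :
    spectralRadius ℂ (G.map ((↑) : ℝ → ℂ)) < 1 := by
  obtain ⟨p, hp0, hp⟩ := hfeas
  rcases Nat.eq_zero_or_pos K with hK | hK
  · subst hK
    have hs : spectrum ℂ (G.map ((↑) : ℝ → ℂ)) = ∅ :=
      Set.eq_empty_iff_forall_notMem.mpr fun μ hμ => hμ (isUnit_of_subsingleton _)
    simp [spectralRadius, hs]
  have hne : (Finset.univ : Finset (Fin K)).Nonempty := by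
    simpa [Finset.univ_nonempty_iff, Fin.pos_iff_nonempty] using hK
  -- p is strictly positive
  have hGp0 : ∀ k, 0 ≤ (G *ᵥ p) k := by
    intro k
    simp only [Matrix.mulVec, dotProduct]
    exact Finset.sum_nonneg fun j _ => mul_nonneg (hG k j) (hp0 j)
  have hppos : ∀ k, 0 < p k := fun k =>
    lt_of_lt_of_le (lt_of_lt_of_le (hη k) (le_add_of_nonneg_left (hGp0 k))) (hp k)
  set θ : ℝ := Finset.univ.sup' hne (fun k => (p k - η k) / p k) with hθ
  have hθlt : θ < 1 := by
    rw [hθ, Finset.sup'_lt_iff]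
    intro k _
    rw [div_lt_one (hppos k)]
    linarith [hη k]
  -- the key bound on the spectrum
  have key : ∀ μ ∈ spectrum ℂ (G.map ((↑) : ℝ → ℂ)), ‖μ‖ ≤ θ := by
    intro μ hμ
    rw [← AlgEquiv.spectrum_eq (Matrix.toLinAlgEquiv' (R := ℂ) (n := Fin K)),
      ← Module.End.hasEigenvalue_iff_mem_spectrum] at hμ
    obtain ⟨x, hx⟩ := hμ.exists_hasEigenvector
    have hxval : (G.map ((↑) : ℝ → ℂ)) *ᵥ x = μ • x := by
      have := hx.apply_eq_smul
      simpa [Matrix.toLinAlgEquiv'_apply] using this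
    set q : Fin K → ℝ := fun k => ‖x k‖ with hq
    have hkey : ∀ k, ‖μ‖ * q k ≤ ∑ j, G k j * q j := by
      intro k
      have h1 : μ * x k = ∑ j, (G k j : ℂ) * x j := by
        have := congrFun hxval k
        simp only [Matrix.mulVec, dotProduct, Matrix.map_apply, Pi.smul_apply,
          smul_eq_mul] at this
        exact this.symm
      calc ‖μ‖ * q k = ‖μ * x k‖ := (norm_mul _ _).symm
        _ = ‖∑ j, (G k j : ℂ) * x j‖ := by rw [h1]
        _ ≤ ∑ j, ‖(G k j : ℂ) * x j‖ := norm_sum_le _ _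
        _ = ∑ j, G k j * q j := by
            refine Finset.sum_congr rfl fun j _ => ?_
            rw [norm_mul, Complex.norm_real, Real.norm_of_nonneg (hG k j)]
    -- normalize by p
    set c : ℝ := Finset.univ.sup' hne (fun k => q k / p k) with hc
    obtain ⟨k₀, _, hk₀⟩ := Finset.exists_mem_eq_sup' hne (fun k => q k / p k)
    have hcq : ∀ k, q k ≤ c * p k := by
      intro k
      have : q k / p k ≤ c := by
        rw [hc]; exact Finset.le_sup' (fun k => q k / p k) (Finset.mem_univ k)
      calc q k = q k / p k * p k := (div_mul_cancel₀ _ (hppos k).ne').symm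
        _ ≤ c * p k := mul_le_mul_of_nonneg_right this (hppos k).le
    have hcpos : 0 < c := by
      obtain ⟨j, hj⟩ := Function.ne_iff.mp hx.right
      have h1 : 0 < q j / p j := div_pos (norm_pos_iff.mpr hj) (hppos j)
      rw [hc]
      exact lt_of_lt_of_le h1 (Finset.le_sup' (fun k => q k / p k) (Finset.mem_univ j))
    have hqk₀ : q k₀ = c * p k₀ := by
      rw [hc, hk₀, div_mul_cancel₀ _ (hppos k₀).ne']
    have hchain : ‖μ‖ * (c * p k₀) ≤ c * (p k₀ - η k₀) := by
      calc ‖μ‖ * (c * p k₀) = ‖μ‖ * q k₀ := by rw [hqk₀]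
        _ ≤ ∑ j, G k₀ j * q j := hkey k₀
        _ ≤ ∑ j, G k₀ j * (c * p j) := by
            exact Finset.sum_le_sum fun j _ => mul_le_mul_of_nonneg_left (hcq j) (hG k₀ j)
        _ = c * (G *ᵥ p) k₀ := by
            rw [Matrix.mulVec, dotProduct, Finset.mul_sum]
            exact Finset.sum_congr rfl fun j _ => by ring
        _ ≤ c * (p k₀ - η k₀) := by
            have := hp k₀
            simp only [Pi.add_apply] at this
            nlinarith [hcpos]
    have hμle : ‖μ‖ ≤ (p k₀ - η k₀) / p k₀ := by
      rw [le_div_iff₀ (hppos k₀)]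
      nlinarith [hcpos]
    rw [hθ]
    exact le_trans hμle (Finset.le_sup' (fun k => (p k - η k) / p k) (Finset.mem_univ k₀))
  -- conclude
  calc spectralRadius ℂ (G.map ((↑) : ℝ → ℂ))
      ≤ (θ.toNNReal : ENNReal) := by
        refine iSup₂_le fun μ hμ => ?_
        rw [ENNReal.coe_le_coe, ← norm_toNNReal]
        exact Real.toNNReal_mono (key μ hμ)
    _ < 1 := by
        rw [← ENNReal.coe_one, ENNReal.coe_lt_coe, ← Real.toNNReal_one]
        exact (Real.toNNReal_lt_toNNReal_iff one_pos).mpr hθlt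
end

section
/- The SINR targets γ̄ = (γ̄_1,...,γ̄_K) with γ̄_k > 0 are jointly achievable in the SISO interference channel under power constraints P_k^max if and only if ρ(G) < 1 and the componentwise-minimal power vector p = (I−G)^{-1}η satisfies p_k ≤ P_k^max for all k. -/
/-!
For `p ≥ 0` the SINR constraint of user `k` is the linear inequality `(G p)ₖ + ηₖ ≤ pₖ`.
A feasible `p` is therefore strictly positive with `G p < p` componentwise, which bounds the
spectral radius of the nonnegative matrix `G` below `1` (Collatz–Wielandt), and then
`p - (1 - G)⁻¹ η = (1 - G)⁻¹ ((1 - G) p - η) ≥ 0`. Conversely, if `ρ(G) < 1` then `Gᵐ → 0` by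
Gelfand's formula, so `1 - G` is invertible with the entrywise nonnegative inverse `∑ Gᵐ`, and
`(1 - G)⁻¹ η` meets every SINR target with equality.
-/

open Matrix Finset Filter Topology

theorem tendsto_pow_atTop_nhds_zero_of_spectralRadius_lt_one {A : Type*} [NormedRing A]
    [NormedAlgebra ℂ A] [CompleteSpace A] {a : A} (ha : spectralRadius ℂ a < 1) :
    Tendsto (a ^ ·) atTop (𝓝 0) := by
  obtain ⟨c, hρc, hc1⟩ := exists_between ha
  have hc : c ≠ ⊤ := (hc1.trans ENNReal.one_lt_top).ne
  have hroot : ∀ᶠ n : ℕ in atTop, ENNReal.ofReal (‖a ^ n‖ ^ (1 / n : ℝ)) < c :=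
    (spectrum.pow_norm_pow_one_div_tendsto_nhds_spectralRadius a).eventually_lt_const hρc
  refine squeeze_zero_norm' ?_ (tendsto_pow_atTop_nhds_zero_of_lt_one ENNReal.toReal_nonneg
    (ENNReal.toReal_lt_of_lt_ofReal (by simpa using hc1)))
  filter_upwards [hroot, eventually_ne_atTop 0] with n hn hn0
  rw [ENNReal.ofReal_lt_iff_lt_toReal (by positivity) hc, one_div] at hn
  calc ‖a ^ n‖ = (‖a ^ n‖ ^ (n⁻¹ : ℝ)) ^ n :=
        (Real.rpow_inv_natCast_pow (norm_nonneg _) hn0).symm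
    _ ≤ c.toReal ^ n := pow_le_pow_left₀ (by positivity) hn.le n

namespace Matrix

variable {n : Type*} [Fintype n]

theorem mulVec_mono_of_nonneg {A : Matrix n n ℝ} (hA : ∀ i j, 0 ≤ A i j) {x y : n → ℝ}
    (h : x ≤ y) : A *ᵥ x ≤ A *ᵥ y := fun i =>
  sum_le_sum fun j _ => mul_le_mul_of_nonneg_left (h j) (hA i j)

variable [DecidableEq n]

theorem tendsto_pow_of_spectralRadius_map_ofReal_lt_one {G : Matrix n n ℝ}
    (hG : spectralRadius ℂ (G.map ((↑) : ℝ → ℂ)) < 1) :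
    Tendsto (G ^ ·) atTop (𝓝 0) := by
  have hC : Tendsto (fun m : ℕ => (G ^ m).map ((↑) : ℝ → ℂ)) atTop (𝓝 0) := by
    let := Matrix.linftyOpNormedRing (n := n) (α := ℂ)
    let := Matrix.linftyOpNormedAlgebra (n := n) (α := ℂ) (R := ℂ)
    have := FiniteDimensional.complete ℂ (Matrix n n ℂ)
    convert tendsto_pow_atTop_nhds_zero_of_spectralRadius_lt_one hG using 2 with m
    · exact map_pow Complex.ofRealHom.mapMatrix G m
    · -- the topology of the `L∞` operator norm is definitionally the entrywise one
      rfl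
  simpa [Function.comp_def] using
    ((continuous_id.matrix_map Complex.continuous_re).tendsto 0).comp hC

theorem spectralRadius_map_ofReal_le_of_mulVec_le {G : Matrix n n ℝ} (hG₀ : ∀ i j, 0 ≤ G i j)
    {p : n → ℝ} (hp : ∀ k, 0 < p k) {r : ℝ} (hr : G *ᵥ p ≤ r • p) :
    spectralRadius ℂ (G.map ((↑) : ℝ → ℂ)) ≤ ENNReal.ofReal r := by
  refine iSup₂_le fun μ hμ => ?_
  rw [← spectrum_toLin', ← Module.End.hasEigenvalue_iff_mem_spectrum] at hμ
  obtain ⟨v, hv, hv0⟩ := hμ.exists_hasEigenvector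
  rw [Module.End.mem_eigenspace_iff, toLin'_apply] at hv
  obtain ⟨j, hj⟩ := Function.ne_iff.mp hv0
  have : Nonempty n := ⟨j⟩
  -- Compare the eigen-equation with `G p ≤ r p` at a coordinate maximizing `‖v j‖ / p j`.
  obtain ⟨k, -, hk⟩ := exists_max_image univ (fun j => ‖v j‖ / p j) univ_nonempty
  set s := ‖v k‖ / p k
  have hs : 0 < s := (div_pos (norm_pos_iff.mpr hj) (hp j)).trans_le (hk j (mem_univ j))
  have hvj : ∀ j, ‖v j‖ ≤ s * p j := fun j => (div_le_iff₀ (hp j)).mp (hk j (mem_univ j))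
  have hμr : ‖μ‖ * ‖v k‖ ≤ r * ‖v k‖ :=
    calc ‖μ‖ * ‖v k‖ = ‖∑ j, (G k j : ℂ) * v j‖ := by
          rw [← norm_smul, ← Pi.smul_apply, ← hv]
          rfl
      _ ≤ ∑ j, ‖(G k j : ℂ) * v j‖ := norm_sum_le _ _
      _ = ∑ j, G k j * ‖v j‖ := by simp [abs_of_nonneg (hG₀ k _)]
      _ ≤ ∑ j, G k j * (s * p j) := by gcongr with j; exacts [hG₀ k j, hvj j]
      _ = s * (G *ᵥ p) k := by
          simp only [mulVec, dotProduct, mul_sum]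
          exact sum_congr rfl fun j _ => by ring
      _ ≤ s * (r * p k) := by gcongr; exact hr k
      _ = r * ‖v k‖ := by simp only [s]; field_simp [(hp k).ne']
  have hvk : 0 < ‖v k‖ := by simpa [s, hp k] using hs
  rw [← enorm_eq_nnnorm, ← ofReal_norm]
  exact ENNReal.ofReal_le_ofReal (le_of_mul_le_mul_right hμr hvk)

theorem spectralRadius_map_ofReal_lt_one_of_mulVec_lt {G : Matrix n n ℝ}
    (hG₀ : ∀ i j, 0 ≤ G i j) {p : n → ℝ} (hp : ∀ k, 0 < p k) (hGp : ∀ k, (G *ᵥ p) k < p k) :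
    spectralRadius ℂ (G.map ((↑) : ℝ → ℂ)) < 1 := by
  rcases isEmpty_or_nonempty n with hn | hn
  · exact (spectralRadius_map_ofReal_le_of_mulVec_le hG₀ hp (r := 0) isEmptyElim).trans_lt
      (by simp)
  obtain ⟨k, -, hk⟩ := exists_max_image univ (fun j => (G *ᵥ p) j / p j) univ_nonempty
  refine (spectralRadius_map_ofReal_le_of_mulVec_le hG₀ hp fun j => ?_).trans_lt
    (ENNReal.ofReal_lt_one.mpr ((div_lt_one (hp k)).mpr (hGp k)))
  exact (div_le_iff₀ (hp j)).mp (hk j (mem_univ j))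

theorem isUnit_one_sub_of_tendsto_pow {G : Matrix n n ℝ} (hG : Tendsto (G ^ ·) atTop (𝓝 0)) :
    IsUnit (1 - G) := by
  rw [isUnit_iff_isUnit_det, isUnit_iff_ne_zero]
  intro hdet
  obtain ⟨v, hv0, hv⟩ := exists_mulVec_eq_zero_iff.mpr hdet
  have hfix : ∀ m : ℕ, (G ^ m) *ᵥ v = v := by
    rw [sub_mulVec, one_mulVec, sub_eq_zero] at hv
    intro m
    induction m with
    | zero => simp
    | succ m ih => rw [pow_succ, ← mulVec_mulVec, ← hv, ih]
  have hlim : Tendsto (fun m : ℕ => (G ^ m) *ᵥ v) atTop (𝓝 (0 *ᵥ v)) :=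
    ((continuous_id.matrix_mulVec continuous_const).tendsto 0).comp hG
  simp only [hfix, zero_mulVec] at hlim
  exact hv0 (tendsto_nhds_unique tendsto_const_nhds hlim)

theorem inv_one_sub_apply_nonneg_of_tendsto_pow {G : Matrix n n ℝ} (hG₀ : ∀ i j, 0 ≤ G i j)
    (hG : Tendsto (G ^ ·) atTop (𝓝 0)) (i j : n) : 0 ≤ (1 - G)⁻¹ i j := by
  have hu := (isUnit_iff_isUnit_det _).mp (isUnit_one_sub_of_tendsto_pow hG)
  have hgeom : ∀ m, (1 - G ^ m) * (1 - G)⁻¹ = ∑ k ∈ range m, G ^ k := fun m => by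
    rw [← geom_sum_mul_neg, mul_assoc, mul_nonsing_inv _ hu, mul_one]
  have hlim : Tendsto (fun m : ℕ => ((1 - G ^ m) * (1 - G)⁻¹) i j) atTop
      (𝓝 (((1 - 0) * (1 - G)⁻¹) i j)) :=
    ((((continuous_const.sub continuous_id).matrix_mul continuous_const).matrix_elem i j).tendsto
      0).comp hG
  rw [sub_zero, one_mul] at hlim
  refine ge_of_tendsto hlim (Eventually.of_forall fun m => ?_)
  rw [hgeom, sum_apply]
  exact sum_nonneg fun k _ => pow_apply_nonneg hG₀ k i j

theorem inv_mulVec_le_of_le_mulVec {A : Matrix n n ℝ} (hA : IsUnit A)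
    (hA₀ : ∀ i j, 0 ≤ A⁻¹ i j) {x y : n → ℝ} (h : x ≤ A *ᵥ y) : A⁻¹ *ᵥ x ≤ y := by
  calc A⁻¹ *ᵥ x ≤ A⁻¹ *ᵥ (A *ᵥ y) := mulVec_mono_of_nonneg hA₀ h
    _ = y := by rw [mulVec_mulVec, nonsing_inv_mul _ ((isUnit_iff_isUnit_det A).mp hA),
      one_mulVec]

theorem spectralRadius_map_ofReal_lt_one_and_inv_mulVec_le {G : Matrix n n ℝ}
    (hG₀ : ∀ i j, 0 ≤ G i j) {η p : n → ℝ} (hη : ∀ k, 0 < η k) (hp : 0 ≤ p)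
    (h : G *ᵥ p + η ≤ p) :
    spectralRadius ℂ (G.map ((↑) : ℝ → ℂ)) < 1 ∧ (1 - G)⁻¹ *ᵥ η ≤ p := by
  have hk : ∀ k, (G *ᵥ p) k + η k ≤ p k := h
  have hGp : ∀ k, 0 ≤ (G *ᵥ p) k := fun k => by simpa using mulVec_mono_of_nonneg hG₀ hp k
  have hρ := spectralRadius_map_ofReal_lt_one_of_mulVec_lt hG₀ (p := p)
    (fun k => by linarith [hk k, hGp k, hη k]) (fun k => by linarith [hk k, hη k])
  have hpow := tendsto_pow_of_spectralRadius_map_ofReal_lt_one hρ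
  refine ⟨hρ, inv_mulVec_le_of_le_mulVec (isUnit_one_sub_of_tendsto_pow hpow)
    (inv_one_sub_apply_nonneg_of_tendsto_pow hG₀ hpow) fun k => ?_⟩
  simp only [sub_mulVec, one_mulVec, Pi.sub_apply]
  linarith [hk k]

theorem mulVec_inv_one_sub_mulVec_add {G : Matrix n n ℝ}
    (hG : spectralRadius ℂ (G.map ((↑) : ℝ → ℂ)) < 1) (η : n → ℝ) :
    G *ᵥ ((1 - G)⁻¹ *ᵥ η) + η = (1 - G)⁻¹ *ᵥ η := by
  have hu := (isUnit_iff_isUnit_det _).mp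
    (isUnit_one_sub_of_tendsto_pow (tendsto_pow_of_spectralRadius_map_ofReal_lt_one hG))
  have hfix : (1 - G) *ᵥ ((1 - G)⁻¹ *ᵥ η) = η := by
    rw [mulVec_mulVec, mul_nonsing_inv _ hu, one_mulVec]
  rw [sub_mulVec, one_mulVec] at hfix
  exact (sub_eq_iff_eq_add'.mp hfix).symm

end Matrix

section InterferenceChannel

variable {ι : Type*} [Fintype ι] [DecidableEq ι] {g : ι → ι → ℝ} {σ2 γbar η : ι → ℝ}
  {G : Matrix ι ι ℝ}

theorem mulVec_add_eq_interference_add_noise (hgd : ∀ k, 0 < g k k)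
    (hGdef : ∀ k j, G k j = if k = j then 0 else γbar k * g k j / g k k)
    (hηdef : ∀ k, η k = γbar k * σ2 k / g k k) (p : ι → ℝ) (k : ι) :
    (G *ᵥ p) k + η k = γbar k * (∑ j ∈ univ.erase k, g k j * p j + σ2 k) / g k k := by
  rw [mulVec, dotProduct, ← sum_erase_add _ _ (mem_univ k), hGdef k k, if_pos rfl, hηdef]
  simp only [zero_mul, add_zero, mul_add, add_div, mul_sum, sum_div]
  congr 1
  refine sum_congr rfl fun j hj => ?_
  rw [hGdef, if_neg (Ne.symm (mem_erase.mp hj).1)]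
  field_simp [(hgd k).ne']

theorem sinr_ge_iff (hg : ∀ k j, 0 ≤ g k j) (hgd : ∀ k, 0 < g k k) (hσ : ∀ k, 0 < σ2 k)
    (hGdef : ∀ k j, G k j = if k = j then 0 else γbar k * g k j / g k k)
    (hηdef : ∀ k, η k = γbar k * σ2 k / g k k) {p : ι → ℝ} (hp : 0 ≤ p) (k : ι) :
    γbar k ≤ g k k * p k / (∑ j ∈ univ.erase k, g k j * p j + σ2 k) ↔
      (G *ᵥ p) k + η k ≤ p k := by
  have hD : 0 < ∑ j ∈ univ.erase k, g k j * p j + σ2 k :=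
    add_pos_of_nonneg_of_pos (sum_nonneg fun j _ => mul_nonneg (hg k j) (hp j)) (hσ k)
  rw [mulVec_add_eq_interference_add_noise hgd hGdef hηdef, le_div_iff₀ hD, div_le_iff₀ (hgd k),
    mul_comm (p k)]

end InterferenceChannel

theorem stmt_11_general (K : ℕ) (g : Fin K → Fin K → ℝ) (σ2 Pmax γbar : Fin K → ℝ)
    (hg : ∀ k j, 0 ≤ g k j) (hgd : ∀ k, 0 < g k k) (hσ : ∀ k, 0 < σ2 k)
    (hγ : ∀ k, 0 < γbar k)
    (G : Matrix (Fin K) (Fin K) ℝ)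
    (hGdef : ∀ k j, G k j = if k = j then 0 else γbar k * g k j / g k k)
    (η : Fin K → ℝ) (hηdef : ∀ k, η k = γbar k * σ2 k / g k k) :
    (∃ p : Fin K → ℝ, (∀ k, 0 ≤ p k ∧ p k ≤ Pmax k) ∧
        ∀ k, γbar k ≤ g k k * p k /
          (∑ j ∈ Finset.univ.erase k, g k j * p j + σ2 k)) ↔
    (spectralRadius ℂ (G.map ((↑) : ℝ → ℂ)) < 1 ∧
      ∀ k, ((1 - G)⁻¹ *ᵥ η) k ≤ Pmax k) := by
  have hG₀ : ∀ i j, 0 ≤ G i j := fun i j => by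
    rw [hGdef]
    split_ifs
    exacts [le_rfl, div_nonneg (mul_nonneg (hγ i).le (hg i j)) (hgd i).le]
  have hη : ∀ k, 0 < η k := fun k => by
    rw [hηdef]
    exact div_pos (mul_pos (hγ k) (hσ k)) (hgd k)
  constructor
  · rintro ⟨p, hpP, hpγ⟩
    have hp₀ : 0 ≤ p := fun k => (hpP k).1
    obtain ⟨hρ, hle⟩ := spectralRadius_map_ofReal_lt_one_and_inv_mulVec_le hG₀ hη hp₀
      fun k => (sinr_ge_iff hg hgd hσ hGdef hηdef hp₀ k).mp (hpγ k)
    exact ⟨hρ, fun k => (hle k).trans (hpP k).2⟩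
  · rintro ⟨hρ, hpP⟩
    have hp₀ : 0 ≤ (1 - G)⁻¹ *ᵥ η := by
      simpa using mulVec_mono_of_nonneg (x := 0) (inv_one_sub_apply_nonneg_of_tendsto_pow hG₀
        (tendsto_pow_of_spectralRadius_map_ofReal_lt_one hρ)) fun k => (hη k).le
    refine ⟨_, fun k => ⟨hp₀ k, hpP k⟩, fun k => (sinr_ge_iff hg hgd hσ hGdef hηdef hp₀ k).mpr ?_⟩
    exact (congrFun (mulVec_inv_one_sub_mulVec_add hρ η) k).le

/-- SINR targets `γ̄ₖ > 0` are jointly achievable in the SISO interference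
channel under power constraints `Pmax` if and only if `ρ(G) < 1` and the
componentwise-minimal power vector `p = (I - G)⁻¹ η` satisfies `pₖ ≤ Pmaxₖ`
for all `k`. -/
theorem stmt_11 (K : ℕ) (g : Fin K → Fin K → ℝ) (σ2 Pmax γbar : Fin K → ℝ)
    (hg : ∀ k j, 0 ≤ g k j) (hgd : ∀ k, 0 < g k k) (hσ : ∀ k, 0 < σ2 k)
    (hP : ∀ k, 0 ≤ Pmax k) (hγ : ∀ k, 0 < γbar k)
    (G : Matrix (Fin K) (Fin K) ℝ)
    (hGdef : ∀ k j, G k j = if k = j then 0 else γbar k * g k j / g k k)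
    (η : Fin K → ℝ) (hηdef : ∀ k, η k = γbar k * σ2 k / g k k) :
    (∃ p : Fin K → ℝ, (∀ k, 0 ≤ p k ∧ p k ≤ Pmax k) ∧
        ∀ k, γbar k ≤ g k k * p k /
          (∑ j ∈ Finset.univ.erase k, g k j * p j + σ2 k)) ↔
    (spectralRadius ℂ (G.map ((↑) : ℝ → ℂ)) < 1 ∧
      ∀ k, ((1 - G)⁻¹ *ᵥ η) k ≤ Pmax k) :=
  stmt_11_general K g σ2 Pmax γbar hg hgd hσ hγ G hGdef η hηdef
end

section
/- If a normal set R ⊆ ℝ₊^K is contained in a box [0, z̃] and r ∈ R lies on the ray from 0 through z̃ (i.e., r = t·z̃ for some 0 ≤ t ≤ 1) such that no point s·z̃ with s > t belongs to R, then R is contained in the union of the K boxes [0, z^{(i)}] where z^{(i)} = z̃ − (z̃_i − r_i)e_i. -/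
/-- A set `D ⊆ ℝ₊ᴷ` is normal if `x ∈ D` and `0 ≤ x' ≤ x` imply `x' ∈ D`. -/
def IsNormalSet (K : ℕ) (D : Set (Fin K → ℝ)) : Prop :=
  ∀ x ∈ D, ∀ x' : Fin K → ℝ, 0 ≤ x' → x' ≤ x → x' ∈ D

/-- Key containment property of the outer polyblock approximation: if a normal
set `R ⊆ [0, z̃]` (with `z̃ > 0`) meets the ray through `z̃` exactly up to
`r = t • z̃`, then `R` is contained in the union of the `K` boxes
`[0, z⁽ⁱ⁾]` with `z⁽ⁱ⁾ = z̃ − (z̃ᵢ − rᵢ) eᵢ`. -/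
theorem stmt_19 (K : ℕ) (R : Set (Fin K → ℝ)) (hR : IsNormalSet K R)
    (ztilde : Fin K → ℝ) (hz : ∀ i, 0 < ztilde i)
    (hsub : R ⊆ Set.Icc (0 : Fin K → ℝ) ztilde)
    (t : ℝ) (ht0 : 0 ≤ t) (ht1 : t ≤ 1)
    (hmem : t • ztilde ∈ R) (hmax : ∀ s : ℝ, t < s → s • ztilde ∉ R) :
    R ⊆ ⋃ i : Fin K,
      Set.Icc (0 : Fin K → ℝ)
        (ztilde - (ztilde i - (t • ztilde) i) • (Pi.single i 1 : Fin K → ℝ)) := by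
  rcases Nat.eq_zero_or_pos K with hK | hK
  · exfalso
    apply hmax (t + 1) (by linarith)
    have : (t + 1) • ztilde = t • ztilde := by
      funext i; exact absurd i.isLt (by omega)
    rw [this]; exact hmem
  intro x hx
  by_contra hnot
  simp only [Set.mem_iUnion, Set.mem_Icc, not_exists, not_and] at hnot
  obtain ⟨hx0, hxz⟩ := hsub hx
  -- for each i, x i > t * ztilde i
  have key : ∀ i, t * ztilde i < x i := by
    intro i
    have h := hnot i hx0
    rw [Pi.le_def] at h
    push_neg at h
    obtain ⟨j, hj⟩ := h
    by_cases hij : j = i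
    · subst hij
      simp only [Pi.sub_apply, Pi.smul_apply, Pi.single_eq_same, smul_eq_mul,
        mul_one] at hj
      linarith
    · exfalso
      simp only [Pi.sub_apply, Pi.smul_apply, Pi.single_eq_of_ne hij,
        smul_eq_mul, mul_zero, sub_zero] at hj
      exact absurd (hxz j) (not_le.mpr hj)
  haveI : Nonempty (Fin K) := ⟨⟨0, hK⟩⟩
  set s := Finset.univ.inf' Finset.univ_nonempty (fun i => x i / ztilde i) with hs
  have hts : t < s := by
    rw [hs, Finset.lt_inf'_iff]
    intro i _
    rw [lt_div_iff₀ (hz i)]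
    linarith [key i]
  apply hmax s hts
  apply hR x hx
  · intro i
    simp only [Pi.zero_apply, Pi.smul_apply, smul_eq_mul]
    exact mul_nonneg (le_of_lt (lt_of_le_of_lt ht0 hts)) (hz i).le
  · intro i
    have : s ≤ x i / ztilde i := Finset.inf'_le _ (Finset.mem_univ i)
    simp only [Pi.smul_apply, smul_eq_mul]
    calc s * ztilde i ≤ (x i / ztilde i) * ztilde i :=
          mul_le_mul_of_nonneg_right this (hz i).le
      _ = x i := div_mul_cancel₀ _ (hz i).ne'
end
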